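/- arXiv:1408.2940 — 4 statements merged into one kernel-verified Lean document; each statement's English description precedes it below -/
import Mathlib

section
/- Let c₀ ∈ [0,1) and c₁ ≥ 0. Then for every θ ∈ [0,1], c₀² θ + min(c₁² θ, 1 − θ) ≤ (c₀² + c₁²)/(1 + c₁²), and moreover (c₀² + c₁²)/(1 + c₁²) < 1. -/
/-! As a function of `θ`, `c₀² θ + min (c₁² θ) (1 - θ)` is concave and piecewise affine, increasing
up to the kink `θ = 1 / (1 + c₁²)` and nonincreasing after it (because `c₀² ≤ 1`); its value at
the kink is `(c₀² + c₁²) / (1 + c₁²)`, which is `< 1` exactly because `c₀² < 1`. -/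

lemma mul_add_min_mul_one_sub_le {q s : ℝ} (hs : 0 ≤ s) (hqs : 0 ≤ q + s) (hq : q ≤ 1) (θ : ℝ) :
    q * θ + min (s * θ) (1 - θ) ≤ (q + s) / (1 + s) := by
  have hpos : 0 < 1 + s := by linarith
  rw [le_div_iff₀ hpos]
  rcases le_total (s * θ) (1 - θ) with hkink | hkink
  · have hθ : θ * (1 + s) ≤ 1 := by linarith
    rw [min_eq_left hkink]
    nlinarith [mul_le_mul_of_nonneg_left hθ hqs]
  · have hθ : 1 ≤ θ * (1 + s) := by linarith
    rw [min_eq_right hkink]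
    nlinarith [mul_le_mul_of_nonneg_left hθ (sub_nonneg.2 hq)]

lemma add_div_one_add_lt_one {q s : ℝ} (hs : 0 ≤ s) (hq : q < 1) : (q + s) / (1 + s) < 1 := by
  rw [div_lt_one (by linarith)]
  linarith

theorem scalar_min_bound_general
    (c₀ c₁ : ℝ) (hc₀ : 0 ≤ c₀) (hc₀' : c₀ < 1) :
    (∀ θ : ℝ, θ ∈ Set.Icc (0 : ℝ) 1 →
      c₀ ^ 2 * θ + min (c₁ ^ 2 * θ) (1 - θ) ≤ (c₀ ^ 2 + c₁ ^ 2) / (1 + c₁ ^ 2)) ∧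
    (c₀ ^ 2 + c₁ ^ 2) / (1 + c₁ ^ 2) < 1 := by
  have hc₀_sq : c₀ ^ 2 < 1 := pow_lt_one₀ hc₀ hc₀' two_ne_zero
  have hc₁_sq : 0 ≤ c₁ ^ 2 := sq_nonneg c₁
  refine ⟨fun θ _ => ?_, add_div_one_add_lt_one hc₁_sq hc₀_sq⟩
  exact mul_add_min_mul_one_sub_le hc₁_sq (by positivity) hc₀_sq.le θ

theorem scalar_min_bound
    (c₀ c₁ : ℝ) (hc₀ : 0 ≤ c₀) (hc₀' : c₀ < 1) (hc₁ : 0 ≤ c₁) :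
    (∀ θ : ℝ, θ ∈ Set.Icc (0 : ℝ) 1 →
      c₀ ^ 2 * θ + min (c₁ ^ 2 * θ) (1 - θ) ≤ (c₀ ^ 2 + c₁ ^ 2) / (1 + c₁ ^ 2)) ∧
    (c₀ ^ 2 + c₁ ^ 2) / (1 + c₁ ^ 2) < 1 :=
  scalar_min_bound_general c₀ c₁ hc₀ hc₀'
end

section
/- Let S be a finite-dimensional real inner product space decomposed as a direct sum S = W₀ ⊕ W₁ ⊕ W₂, with L²-orthogonal projections Q_l : S → W_l. Let a(·,·) be a symmetric positive definite bilinear form on S with associated operator A (defined by ⟨Au, v⟩ = a(u,v)), and let B_l : W_l → W_l be symmetric positive definite operators. Define C = Σ_{l=0}^{2} B_l⁻¹ Q_l. If there exist constants K₁, K₂ > 0 such that K₁⁻¹ Σ_l ⟨B_l u_l, u_l⟩ ≤ a(u₀+u₁+u₂, u₀+u₁+u₂) ≤ K₂ Σ_l ⟨B_l u_l, u_l⟩ for all u_l ∈ W_l, then every eigenvalue of CA is real and lies in the interval [K₁⁻¹, K₂]. -/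
open scoped RealInnerProductSpace

/-!
For an eigenpair `C A u = μ u` put `w_l = B_l⁻¹ Q_l A u ∈ W_l`. Then `∑ w_l = μ u` and
`⟪B_l w_l, w_l⟫ = ⟪A u, w_l⟫`, so the splitting energy `T = ∑ ⟪B_l w_l, w_l⟫` equals `μ ⟪A u, u⟫`,
while the energy `⟪A (∑ w_l), ∑ w_l⟫ = μ² ⟪A u, u⟫` equals `μ T`. As the `W_l` span `S` and
`A u ≠ 0`, some `w_l` is nonzero and `T > 0`; dividing the two-sided bound for `(w_l)` by `T`
gives `K₁⁻¹ ≤ μ ≤ K₂`.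
-/

theorem Submodule.mapsTo_of_leftInvOn {K V : Type*} [Field K] [AddCommGroup V] [Module K V]
    {W : Submodule K V} [FiniteDimensional K W] {f g : V →ₗ[K] V}
    (hf : Set.MapsTo f W W) (hgf : Set.LeftInvOn g f W) : Set.MapsTo g W W := by
  intro w hw
  let fW : W →ₗ[K] W := f.restrict hf
  have hinj : Function.Injective fW := fun x y hxy =>
    Subtype.ext <| by rw [← hgf x.2, ← hgf y.2]; exact congrArg (g ∘ Subtype.val) hxy
  obtain ⟨x, hx⟩ := LinearMap.injective_iff_surjective.mp hinj ⟨w, hw⟩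
  have hfx : f x = w := congrArg Subtype.val hx
  rw [← hfx, hgf x.2]
  exact x.2

section SplittingEnergy

variable {E ι : Type*} [NormedAddCommGroup E] [InnerProductSpace ℝ E] [Fintype ι]
  {W : ι → Submodule ℝ E} [∀ l, (W l).HasOrthogonalProjection] {B : ι → E →ₗ[ℝ] E}
  {v : E} {w : ι → E}

theorem sum_inner_eq_inner_sum_of_apply_eq_starProjection (hw : ∀ l, w l ∈ W l)
    (hBw : ∀ l, B l (w l) = (W l).starProjection v) :
    ∑ l, ⟪B l (w l), w l⟫ = ⟪v, ∑ l, w l⟫ := by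
  rw [inner_sum]
  refine Finset.sum_congr rfl fun l _ => ?_
  rw [hBw, Submodule.inner_starProjection_left_eq_right,
    Submodule.starProjection_eq_self_iff.mpr (hw l)]

theorem sum_inner_pos_of_apply_eq_starProjection (htop : ⨆ l, W l = ⊤)
    (hBpos : ∀ l, ∀ u ∈ W l, u ≠ 0 → 0 < ⟪B l u, u⟫) (hw : ∀ l, w l ∈ W l)
    (hBw : ∀ l, B l (w l) = (W l).starProjection v) (hv : v ≠ 0) :
    0 < ∑ l, ⟪B l (w l), w l⟫ := by
  have hnonneg l : 0 ≤ ⟪B l (w l), w l⟫ := by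
    rcases eq_or_ne (w l) 0 with h | h
    · simp [h]
    · exact (hBpos l _ (hw l) h).le
  obtain ⟨l, hl⟩ : ∃ l, w l ≠ 0 := by
    by_contra! hzero
    have hperp : v ∈ ⨅ l, (W l)ᗮ := Submodule.mem_iInf _ |>.mpr fun l =>
      ((W l).starProjection_apply_eq_zero_iff).mp <| by rw [← hBw, hzero, map_zero]
    rw [Submodule.iInf_orthogonal, htop, Submodule.top_orthogonal_eq_bot] at hperp
    exact hv hperp
  exact Finset.sum_pos' (fun l _ => hnonneg l) ⟨l, Finset.mem_univ l, hBpos l _ (hw l) hl⟩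

end SplittingEnergy

theorem additive_subspace_correction_spectrum_general
    {S : Type*} [NormedAddCommGroup S] [InnerProductSpace ℝ S] [FiniteDimensional ℝ S]
    (W : Fin 3 → Submodule ℝ S)
    (hdirect : DirectSum.IsInternal W)
    (A : S →ₗ[ℝ] S)
    (hApos : ∀ u : S, u ≠ 0 → 0 < ⟪A u, u⟫)
    (B Binv : Fin 3 → (S →ₗ[ℝ] S))
    (hBmap : ∀ l, ∀ w ∈ W l, B l w ∈ W l)
    (hBpos : ∀ l, ∀ u ∈ W l, u ≠ 0 → 0 < ⟪B l u, u⟫)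
    (hBinv : ∀ l, ∀ w ∈ W l, Binv l (B l w) = w ∧ B l (Binv l w) = w)
    (K₁ K₂ : ℝ)
    (hsandwich : ∀ u : Fin 3 → S, (∀ l, u l ∈ W l) →
      K₁⁻¹ * (∑ l, ⟪B l (u l), u l⟫) ≤ ⟪A (∑ l, u l), ∑ l, u l⟫ ∧
      ⟪A (∑ l, u l), ∑ l, u l⟫ ≤ K₂ * (∑ l, ⟪B l (u l), u l⟫))
    (C : S →ₗ[ℝ] S)
    (hC : C = ∑ l, (Binv l) ∘ₗ ((W l).subtype ∘ₗ ((W l).orthogonalProjection).toLinearMap))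
    (μ : ℝ) (u : S) (hu : u ≠ 0) (heig : (C ∘ₗ A) u = μ • u) :
    K₁⁻¹ ≤ μ ∧ μ ≤ K₂ := by
  have hBinvW l : Set.MapsTo (Binv l) (W l) (W l) :=
    Submodule.mapsTo_of_leftInvOn (hBmap l) fun w hw => (hBinv l w hw).1
  set w : Fin 3 → S := fun l => Binv l ((W l).starProjection (A u))
  have hwW l : w l ∈ W l := hBinvW l ((W l).starProjection_apply_mem (A u))
  have hBw l : B l (w l) = (W l).starProjection (A u) :=
    (hBinv l _ ((W l).starProjection_apply_mem (A u))).2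
  have hsum : ∑ l, w l = μ • u := by
    rw [← heig, hC, LinearMap.comp_apply, LinearMap.sum_apply]
    rfl -- the projections in `hC` unfold to `starProjection`
  have hAu : A u ≠ 0 := fun h => (hApos u hu).ne' (by rw [h, inner_zero_left])
  have hpos : 0 < ∑ l, ⟪B l (w l), w l⟫ :=
    sum_inner_pos_of_apply_eq_starProjection hdirect.submodule_iSup_eq_top hBpos hwW hBw hAu
  have henergy : ⟪A (∑ l, w l), ∑ l, w l⟫ = μ * ∑ l, ⟪B l (w l), w l⟫ := by
    rw [sum_inner_eq_inner_sum_of_apply_eq_starProjection hwW hBw, hsum, map_smul,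
      real_inner_smul_left, real_inner_smul_right]
  obtain ⟨hlow, hhigh⟩ := hsandwich w hwW
  rw [henergy] at hlow hhigh
  exact ⟨le_of_mul_le_mul_right hlow hpos, le_of_mul_le_mul_right hhigh hpos⟩

/-- Yserentant's abstract additive subspace correction result for three subspaces:
if the `B_l`-weighted splitting norms are uniformly equivalent to the energy norm,
then the eigenvalues of the preconditioned operator `C A` lie in `[K₁⁻¹, K₂]`. -/
theorem additive_subspace_correction_spectrum
    {S : Type*} [NormedAddCommGroup S] [InnerProductSpace ℝ S] [FiniteDimensional ℝ S]
    (W : Fin 3 → Submodule ℝ S)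
    (hdirect : DirectSum.IsInternal W)
    (A : S →ₗ[ℝ] S)
    (hAsym : ∀ u v : S, ⟪A u, v⟫ = ⟪u, A v⟫)
    (hApos : ∀ u : S, u ≠ 0 → 0 < ⟪A u, u⟫)
    (B Binv : Fin 3 → (S →ₗ[ℝ] S))
    (hBmap : ∀ l, ∀ w ∈ W l, B l w ∈ W l)
    (hBsym : ∀ l, ∀ u ∈ W l, ∀ v ∈ W l, ⟪B l u, v⟫ = ⟪u, B l v⟫)
    (hBpos : ∀ l, ∀ u ∈ W l, u ≠ 0 → 0 < ⟪B l u, u⟫)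
    (hBinv : ∀ l, ∀ w ∈ W l, Binv l (B l w) = w ∧ B l (Binv l w) = w)
    (K₁ K₂ : ℝ) (hK₁ : 0 < K₁) (hK₂ : 0 < K₂)
    (hsandwich : ∀ u : Fin 3 → S, (∀ l, u l ∈ W l) →
      K₁⁻¹ * (∑ l, ⟪B l (u l), u l⟫) ≤ ⟪A (∑ l, u l), ∑ l, u l⟫ ∧
      ⟪A (∑ l, u l), ∑ l, u l⟫ ≤ K₂ * (∑ l, ⟪B l (u l), u l⟫))
    (C : S →ₗ[ℝ] S)
    (hC : C = ∑ l, (Binv l) ∘ₗ ((W l).subtype ∘ₗ ((W l).orthogonalProjection).toLinearMap))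
    (μ : ℝ) (u : S) (hu : u ≠ 0) (heig : (C ∘ₗ A) u = μ • u) :
    K₁⁻¹ ≤ μ ∧ μ ≤ K₂ :=
  additive_subspace_correction_spectrum_general W hdirect A hApos B Binv hBmap hBpos hBinv K₁ K₂
    hsandwich C hC μ u hu heig
end

section
/- Let (·,·)* be a real inner product on a vector space, of the form (u,v)* = b(u,v) + t(u,v), where b and t are symmetric positive semidefinite bilinear forms. Let W₁, W₂ be subspaces with b(u₁, u₂) = 0 for all u₁ ∈ W₁, u₂ ∈ W₂, and suppose there is a constant M ≥ 0 such that t(u,u) ≤ M · b(u,u) for all u ∈ W₁ ∪ W₂, and that b(u,u) + t(u,u) > 0 for nonzero u ∈ W₁ + W₂. Then there exists a constant C* < 1, depending only on M, such that |(u₁, u₂)*| ≤ C* ‖u₁‖* ‖u₂‖* for all u₁ ∈ W₁, u₂ ∈ W₂, where ‖u‖* = (u,u)*^{1/2}. Consequently ‖u₁‖*² + ‖u₂‖*² ≤ (1 − C*)⁻¹ ‖u₁ + u₂‖*². -/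
/-!
Since `b` vanishes across the splitting, `(u₁, u₂)* = t(u₁, u₂)`. The trace bound
`t ≤ M b` rewrites as `t ≤ C (b + t)` with `C = M / (M + 1) < 1`, so Cauchy–Schwarz for `t`
gives the strengthened Cauchy–Schwarz inequality with constant `C`. Expanding
`‖u₁ + u₂‖*²` and using `2 ‖u₁‖* ‖u₂‖* ≤ ‖u₁‖*² + ‖u₂‖*²` then yields the stable splitting.
-/

lemma le_div_add_one_mul_add {x y M : ℝ} (hM : 0 < M + 1) (h : x ≤ M * y) :
    x ≤ M / (M + 1) * (y + x) := by
  rw [div_mul_eq_mul_div, le_div_iff₀ hM]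
  linarith

lemma add_le_inv_one_sub_mul_of_abs_le {x y s C : ℝ} (hx : 0 ≤ x) (hy : 0 ≤ y)
    (hC₀ : 0 ≤ C) (hC₁ : C < 1) (hs : |s| ≤ C * √x * √y) :
    x + y ≤ (1 - C)⁻¹ * (x + y + 2 * s) := by
  have amgm : 2 * (√x * √y) ≤ x + y := by
    simpa [Real.sq_sqrt hx, Real.sq_sqrt hy, mul_assoc] using two_mul_le_add_sq √x √y
  rw [le_inv_mul_iff₀ (sub_pos.mpr hC₁)]
  nlinarith [neg_abs_le s, mul_le_mul_of_nonneg_left amgm hC₀]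

namespace LinearMap.BilinForm

variable {V : Type*} [AddCommGroup V] [Module ℝ V]

lemma abs_apply_le_sqrt_mul_sqrt (B : LinearMap.BilinForm ℝ V) (hB : B.IsSymm)
    (hs : ∀ x, 0 ≤ B x x) (x y : V) : |B x y| ≤ √(B x x) * √(B y y) := by
  rw [← Real.sqrt_mul (hs x)]
  exact Real.abs_le_sqrt (B.apply_sq_le_of_symm hs (isSymm_iff.mp hB) x y)

lemma IsSymm.apply_add_add {B : LinearMap.BilinForm ℝ V} (hB : B.IsSymm) (x y : V) :
    B (x + y) (x + y) = B x x + B y y + 2 * B x y := by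
  rw [hB.polarization x y]
  ring

lemma abs_add_apply_le_of_apply_eq_zero (b t : LinearMap.BilinForm ℝ V) (ht : t.IsSymm)
    (hts : ∀ x, 0 ≤ t x x) {c : ℝ} (hc : 0 ≤ c) {u v : V} (hbuv : b u v = 0)
    (hu : t u u ≤ c * (b u u + t u u)) (hv : t v v ≤ c * (b v v + t v v)) :
    |b u v + t u v| ≤ c * √(b u u + t u u) * √(b v v + t v v) := by
  rw [hbuv, zero_add]
  calc |t u v| ≤ √(t u u) * √(t v v) := t.abs_apply_le_sqrt_mul_sqrt ht hts u v
    _ ≤ √(c * (b u u + t u u)) * √(c * (b v v + t v v)) := by gcongr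
    _ = c * √(b u u + t u u) * √(b v v + t v v) := by
      rw [Real.sqrt_mul hc, Real.sqrt_mul hc]
      linear_combination √(b u u + t u u) * √(b v v + t v v) * Real.mul_self_sqrt hc

lemma add_le_inv_one_sub_mul_apply_add_add (B : LinearMap.BilinForm ℝ V) (hB : B.IsSymm)
    (hs : ∀ x, 0 ≤ B x x) {C : ℝ} (hC₀ : 0 ≤ C) (hC₁ : C < 1) {u v : V}
    (h : |B u v| ≤ C * √(B u u) * √(B v v)) :
    B u u + B v v ≤ (1 - C)⁻¹ * B (u + v) (u + v) := by
  rw [hB.apply_add_add]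
  exact add_le_inv_one_sub_mul_of_abs_le (hs u) (hs v) hC₀ hC₁ h

end LinearMap.BilinForm

open LinearMap.BilinForm in
theorem stable_splitting_from_orthogonality_and_trace_general
    {V : Type*} [AddCommGroup V] [Module ℝ V]
    (b t : V →ₗ[ℝ] V →ₗ[ℝ] ℝ)
    (hbsym : ∀ u v : V, b u v = b v u)
    (htsym : ∀ u v : V, t u v = t v u)
    (hbpsd : ∀ u : V, 0 ≤ b u u)
    (htpsd : ∀ u : V, 0 ≤ t u u)
    (W₁ W₂ : Submodule ℝ V)
    (hborth : ∀ u₁ ∈ W₁, ∀ u₂ ∈ W₂, b u₁ u₂ = 0)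
    (M : ℝ) (hM : 0 ≤ M)
    (htrace : ∀ u : V, u ∈ W₁ ∨ u ∈ W₂ → t u u ≤ M * b u u) :
    ∃ Cstar : ℝ, Cstar < 1 ∧
      (∀ u₁ ∈ W₁, ∀ u₂ ∈ W₂,
        |b u₁ u₂ + t u₁ u₂| ≤
          Cstar * Real.sqrt (b u₁ u₁ + t u₁ u₁) * Real.sqrt (b u₂ u₂ + t u₂ u₂)) ∧
      (∀ u₁ ∈ W₁, ∀ u₂ ∈ W₂,
        (b u₁ u₁ + t u₁ u₁) + (b u₂ u₂ + t u₂ u₂) ≤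
          (1 - Cstar)⁻¹ * (b (u₁ + u₂) (u₁ + u₂) + t (u₁ + u₂) (u₁ + u₂))) := by
  have hM₁ : 0 < M + 1 := by linarith
  have hC₀ : 0 ≤ M / (M + 1) := div_nonneg hM hM₁.le
  have hC₁ : M / (M + 1) < 1 := (div_lt_one hM₁).mpr (lt_add_one M)
  have hfraction : ∀ u, u ∈ W₁ ∨ u ∈ W₂ → t u u ≤ M / (M + 1) * (b u u + t u u) :=
    fun u hu ↦ le_div_add_one_mul_add hM₁ (htrace u hu)
  have hCS : ∀ u₁ ∈ W₁, ∀ u₂ ∈ W₂, |b u₁ u₂ + t u₁ u₂| ≤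
      M / (M + 1) * √(b u₁ u₁ + t u₁ u₁) * √(b u₂ u₂ + t u₂ u₂) :=
    fun u₁ h₁ u₂ h₂ ↦ abs_add_apply_le_of_apply_eq_zero b t ⟨htsym⟩ htpsd hC₀
      (hborth u₁ h₁ u₂ h₂) (hfraction u₁ (.inl h₁)) (hfraction u₂ (.inr h₂))
  refine ⟨M / (M + 1), hC₁, hCS, fun u₁ h₁ u₂ h₂ ↦ ?_⟩
  simpa only [LinearMap.add_apply] using
    add_le_inv_one_sub_mul_apply_add_add (b + t) (IsSymm.add ⟨hbsym⟩ ⟨htsym⟩)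
      (fun u ↦ add_nonneg (hbpsd u) (htpsd u)) hC₀ hC₁
      (by simpa only [LinearMap.add_apply] using hCS u₁ h₁ u₂ h₂)

/-- Abstract form of Lemma 3.2(b): if `b` vanishes between `W₁` and `W₂` and the
penalty form `t` is controlled by `b` on each subspace, then a strengthened
Cauchy-Schwarz inequality with constant `C* < 1` holds, and hence the splitting
`W₁ ⊕ W₂` is stable. -/
theorem stable_splitting_from_orthogonality_and_trace
    {V : Type*} [AddCommGroup V] [Module ℝ V]
    (b t : V →ₗ[ℝ] V →ₗ[ℝ] ℝ)
    (hbsym : ∀ u v : V, b u v = b v u)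
    (htsym : ∀ u v : V, t u v = t v u)
    (hbpsd : ∀ u : V, 0 ≤ b u u)
    (htpsd : ∀ u : V, 0 ≤ t u u)
    (W₁ W₂ : Submodule ℝ V)
    (hborth : ∀ u₁ ∈ W₁, ∀ u₂ ∈ W₂, b u₁ u₂ = 0)
    (M : ℝ) (hM : 0 ≤ M)
    (htrace : ∀ u : V, u ∈ W₁ ∨ u ∈ W₂ → t u u ≤ M * b u u)
    (hpos : ∀ u : V, u ∈ W₁ ⊔ W₂ → u ≠ 0 → 0 < b u u + t u u) :
    ∃ Cstar : ℝ, Cstar < 1 ∧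
      (∀ u₁ ∈ W₁, ∀ u₂ ∈ W₂,
        |b u₁ u₂ + t u₁ u₂| ≤
          Cstar * Real.sqrt (b u₁ u₁ + t u₁ u₁) * Real.sqrt (b u₂ u₂ + t u₂ u₂)) ∧
      (∀ u₁ ∈ W₁, ∀ u₂ ∈ W₂,
        (b u₁ u₁ + t u₁ u₁) + (b u₂ u₂ + t u₂ u₂) ≤
          (1 - Cstar)⁻¹ * (b (u₁ + u₂) (u₁ + u₂) + t (u₁ + u₂) (u₁ + u₂))) :=
  stable_splitting_from_orthogonality_and_trace_general b t hbsym htsym hbpsd htpsd W₁ W₂ hborth M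
    hM htrace
end

section
/- For any reals λ, c > 0, any x₁, x₂, y₁, y₂ ≥ 0 with λ x₁² ≤ c y₁² and λ x₂² ≤ c y₂², and any δ ∈ (0,1), one has λ x₁ x₂ ≤ max(1−δ, δ c) · (y₁² + λ x₁²)^{1/2} (y₂² + λ x₂²)^{1/2}; in particular, choosing δ = 1/(1+c) gives λ x₁ x₂ ≤ (c/(1+c)) · (y₁² + λ x₁²)^{1/2} (y₂² + λ x₂²)^{1/2} with c/(1+c) < 1. -/
theorem penalty_strengthened_cauchy_schwarz
    (lam c x₁ x₂ y₁ y₂ : ℝ) (hlam : 0 < lam) (hc : 0 < c)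
    (hx₁ : 0 ≤ x₁) (hx₂ : 0 ≤ x₂) (hy₁ : 0 ≤ y₁) (hy₂ : 0 ≤ y₂)
    (htr₁ : lam * x₁ ^ 2 ≤ c * y₁ ^ 2) (htr₂ : lam * x₂ ^ 2 ≤ c * y₂ ^ 2) :
    (∀ δ : ℝ, δ ∈ Set.Ioo (0 : ℝ) 1 →
      lam * x₁ * x₂ ≤ max (1 - δ) (δ * c) *
        (Real.sqrt (y₁ ^ 2 + lam * x₁ ^ 2) * Real.sqrt (y₂ ^ 2 + lam * x₂ ^ 2))) ∧
    lam * x₁ * x₂ ≤ (c / (1 + c)) *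
      (Real.sqrt (y₁ ^ 2 + lam * x₁ ^ 2) * Real.sqrt (y₂ ^ 2 + lam * x₂ ^ 2)) ∧
    c / (1 + c) < 1 := by
  set s₁ := Real.sqrt (lam * x₁ ^ 2) with hs₁def
  set s₂ := Real.sqrt (lam * x₂ ^ 2) with hs₂def
  set A := Real.sqrt (y₁ ^ 2 + lam * x₁ ^ 2) with hAdef
  set B := Real.sqrt (y₂ ^ 2 + lam * x₂ ^ 2) with hBdef
  have h1 : (0:ℝ) ≤ lam * x₁ ^ 2 := by positivity
  have h2 : (0:ℝ) ≤ lam * x₂ ^ 2 := by positivity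
  have hs₁ : s₁ ^ 2 = lam * x₁ ^ 2 := Real.sq_sqrt h1
  have hs₂ : s₂ ^ 2 = lam * x₂ ^ 2 := Real.sq_sqrt h2
  have hs₁n : 0 ≤ s₁ := Real.sqrt_nonneg _
  have hs₂n : 0 ≤ s₂ := Real.sqrt_nonneg _
  have hAn : 0 ≤ A := Real.sqrt_nonneg _
  have hBn : 0 ≤ B := Real.sqrt_nonneg _
  have hA : A ^ 2 = y₁ ^ 2 + lam * x₁ ^ 2 := Real.sq_sqrt (by positivity)
  have hB : B ^ 2 = y₂ ^ 2 + lam * x₂ ^ 2 := Real.sq_sqrt (by positivity)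
  -- s₁ * s₂ = lam * x₁ * x₂
  have hss : s₁ * s₂ = lam * x₁ * x₂ := by
    rw [hs₁def, hs₂def, ← Real.sqrt_mul h1]
    rw [show lam * x₁ ^ 2 * (lam * x₂ ^ 2) = (lam * x₁ * x₂) ^ 2 by ring]
    exact Real.sqrt_sq (by positivity)
  -- λ x₁ x₂ ≤ c y₁ y₂
  have hcy : lam * (x₁ * x₂) ≤ c * (y₁ * y₂) := by
    have ha : (0:ℝ) ≤ lam * (x₁ * x₂) := by positivity
    have hb : (0:ℝ) ≤ c * (y₁ * y₂) := by positivity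
    have hsq : (lam * (x₁ * x₂)) ^ 2 ≤ (c * (y₁ * y₂)) ^ 2 := by
      have := mul_le_mul htr₁ htr₂ h2 (by positivity)
      nlinarith
    calc lam * (x₁ * x₂) = Real.sqrt ((lam * (x₁ * x₂)) ^ 2) := (Real.sqrt_sq ha).symm
      _ ≤ Real.sqrt ((c * (y₁ * y₂)) ^ 2) := Real.sqrt_le_sqrt hsq
      _ = c * (y₁ * y₂) := Real.sqrt_sq hb
  -- Cauchy–Schwarz: y₁ y₂ + s₁ s₂ ≤ A * B
  have hCS : y₁ * y₂ + s₁ * s₂ ≤ A * B := by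
    have hsq : (y₁ * y₂ + s₁ * s₂) ^ 2 ≤ (A * B) ^ 2 := by
      have : (A * B) ^ 2 = (y₁ ^ 2 + s₁ ^ 2) * (y₂ ^ 2 + s₂ ^ 2) := by
        rw [mul_pow, hA, hB, hs₁, hs₂]
      nlinarith [sq_nonneg (y₁ * s₂ - y₂ * s₁)]
    nlinarith [mul_nonneg hAn hBn, mul_nonneg (mul_nonneg hy₁ hy₂) (mul_nonneg hs₁n hs₂n),
      add_nonneg (mul_nonneg hy₁ hy₂) (mul_nonneg hs₁n hs₂n)]
  have main : ∀ δ : ℝ, δ ∈ Set.Ioo (0 : ℝ) 1 →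
      lam * x₁ * x₂ ≤ max (1 - δ) (δ * c) * (A * B) := by
    intro δ ⟨hδ0, hδ1⟩
    have hm1 : 1 - δ ≤ max (1 - δ) (δ * c) := le_max_left _ _
    have hm2 : δ * c ≤ max (1 - δ) (δ * c) := le_max_right _ _
    have hmn : 0 ≤ max (1 - δ) (δ * c) := le_trans (by linarith) hm1
    have key : lam * x₁ * x₂ ≤ (1 - δ) * (s₁ * s₂) + (δ * c) * (y₁ * y₂) := by
      have heq : lam * x₁ * x₂ = (1 - δ) * (s₁ * s₂) + δ * (lam * (x₁ * x₂)) := by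
        rw [hss]; ring
      rw [heq]
      have h := mul_le_mul_of_nonneg_left hcy hδ0.le
      rw [← mul_assoc] at h
      linarith
    calc lam * x₁ * x₂ ≤ (1 - δ) * (s₁ * s₂) + (δ * c) * (y₁ * y₂) := key
      _ ≤ max (1 - δ) (δ * c) * (s₁ * s₂) + max (1 - δ) (δ * c) * (y₁ * y₂) := by
          have ha := mul_le_mul_of_nonneg_right hm1 (mul_nonneg hs₁n hs₂n)
          have hb := mul_le_mul_of_nonneg_right hm2 (mul_nonneg hy₁ hy₂)
          linarith
      _ = max (1 - δ) (δ * c) * (y₁ * y₂ + s₁ * s₂) := by ring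
      _ ≤ max (1 - δ) (δ * c) * (A * B) := mul_le_mul_of_nonneg_left hCS hmn
  refine ⟨main, ?_, ?_⟩
  · have h1c : (0:ℝ) < 1 + c := by linarith
    have hδ : (1 / (1 + c) : ℝ) ∈ Set.Ioo (0:ℝ) 1 := by
      constructor
      · positivity
      · rw [div_lt_one h1c]; linarith
    have := main _ hδ
    have hmax : max (1 - 1 / (1 + c)) (1 / (1 + c) * c) = c / (1 + c) := by
      rw [max_eq_right (le_of_eq ?_)]
      · field_simp
      · field_simp; ring
    rwa [hmax] at this
  · rw [div_lt_one (by linarith)]; linarith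
end
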